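/- arXiv:1008.3701 — 7 statements merged into one kernel-verified Lean document; each statement's English description precedes it below -/
import Mathlib

section
/- Let α : R → S be a homomorphism of graded-commutative noetherian rings (or simply commutative noetherian rings), V ⊆ Spec R a specialization closed subset, and M an S-module. Then M_p = 0 for all primes p ∈ Spec R \ V if and only if M_q = 0 for all primes q ∈ Spec S \ (α*)^{-1}(V), where α* : Spec S → Spec R is the induced map on spectra and M_p denotes localization of M at p as an R-module. -/
/-!
If `M_q ≠ 0` for a prime `q` of `S`, then `M_p ≠ 0` for `p = α*(q)`, because `R \ p` acts
through `S \ q`. Conversely, if `M_p ≠ 0`, some `m ∈ M` has `R`-annihilator inside `p`; that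
annihilator is the contraction of `Ann_S m`, so `Ann_S m` misses `α(R \ p)` and lies in a prime
`q` missing it too. Then `M_q ≠ 0` and `α*(q) ≤ p`, so `p` is in every specialization closed set
containing `α*(Supp_S M)`.
-/

namespace Module

variable {R S M : Type*} [CommRing R] [CommRing S] [Algebra R S]
  [AddCommGroup M] [Module R M] [Module S M] [IsScalarTower R S M]

lemma annihilator_span_singleton_eq_comap (m : M) :
    (R ∙ m).annihilator = ((S ∙ m).annihilator).comap (algebraMap R S) := by
  ext r
  simp only [Ideal.mem_comap, Submodule.mem_annihilator_span_singleton, algebraMap_smul]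

lemma comap_mem_support {q : PrimeSpectrum S} (hq : q ∈ support S M) :
    q.comap (algebraMap R S) ∈ support R M := by
  rw [mem_support_iff_exists_annihilator] at hq ⊢
  obtain ⟨m, hm⟩ := hq
  exact ⟨m, (annihilator_span_singleton_eq_comap (S := S) m).trans_le (Ideal.comap_mono hm)⟩

lemma exists_mem_support_comap_le {p : PrimeSpectrum R} (hp : p ∈ support R M) :
    ∃ q ∈ support S M, q.comap (algebraMap R S) ≤ p := by
  obtain ⟨m, hm⟩ := mem_support_iff_exists_annihilator.mp hp
  rw [annihilator_span_singleton_eq_comap (S := S)] at hm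
  obtain ⟨q, hmq, hq, hqp⟩ := Ideal.exists_ideal_comap_le_prime p.asIdeal _ hm
  exact ⟨⟨q, hq⟩, mem_support_iff_exists_annihilator.mpr ⟨m, hmq⟩, hqp⟩

theorem support_subset_iff_support_subset_preimage_comap {V : Set (PrimeSpectrum R)}
    (hV : IsUpperSet V) :
    support R M ⊆ V ↔ support S M ⊆ PrimeSpectrum.comap (algebraMap R S) ⁻¹' V := by
  refine ⟨fun h q hq ↦ h (comap_mem_support hq), fun h p hp ↦ ?_⟩
  obtain ⟨q, hq, hqp⟩ := exists_mem_support_comap_le (S := S) hp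
  exact hV hqp (h hq)

end Module

theorem stmt0_general {R S : Type*} [CommRing R] [CommRing S]
    (α : R →+* S) (V : Set (PrimeSpectrum R))
    (hV : ∀ p ∈ V, ∀ p' : PrimeSpectrum R, p.asIdeal ≤ p'.asIdeal → p' ∈ V)
    (M : Type*) [AddCommGroup M] [Module S M] :
    letI : Module R M := Module.compHom M α
    ((∀ p : PrimeSpectrum R, p ∉ V →
        Subsingleton (LocalizedModule p.asIdeal.primeCompl M)) ↔
      (∀ q : PrimeSpectrum S, PrimeSpectrum.comap α q ∉ V →
        Subsingleton (LocalizedModule q.asIdeal.primeCompl M))) := by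
  let : Algebra R S := α.toAlgebra
  let : Module R M := Module.compHom M α
  have : IsScalarTower R S M := IsScalarTower.of_algebraMap_smul fun _ _ ↦ rfl
  have hV' : IsUpperSet V := fun p p' hpp' hp ↦ hV p hp p' hpp'
  simp only [← Module.notMem_support_iff, not_imp_not]
  exact Module.support_subset_iff_support_subset_preimage_comap (S := S) hV'

/-- **Lemma (rings).** Let `α : R → S` be a homomorphism of commutative noetherian rings,
`V ⊆ Spec R` a specialization closed subset, and `M` an `S`-module.  Then `M_p = 0` for all
primes `p ∈ Spec R \ V` if and only if `M_q = 0` for all primes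
`q ∈ Spec S \ (α*)⁻¹(V)`, where the localization at a prime `p` of `R` is taken by
restricting scalars along `α`. -/
theorem stmt0 {R S : Type*} [CommRing R] [CommRing S]
    [IsNoetherianRing R] [IsNoetherianRing S]
    (α : R →+* S) (V : Set (PrimeSpectrum R))
    (hV : ∀ p ∈ V, ∀ p' : PrimeSpectrum R, p.asIdeal ≤ p'.asIdeal → p' ∈ V)
    (M : Type*) [AddCommGroup M] [Module S M] :
    letI : Module R M := Module.compHom M α
    ((∀ p : PrimeSpectrum R, p ∉ V →
        Subsingleton (LocalizedModule p.asIdeal.primeCompl M)) ↔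
      (∀ q : PrimeSpectrum S, PrimeSpectrum.comap α q ∉ V →
        Subsingleton (LocalizedModule q.asIdeal.primeCompl M))) :=
  stmt0_general α V hV M
end

section
/- Let L : C → C be a localization functor with adjunction morphism η : Id → L (so Lη is invertible and Lη = ηL), and suppose L admits a right adjoint Γ. Then Γ is a colocalization functor, i.e., the coadjunction θ : Γ → Id satisfies that Γθ is invertible and Γθ = θΓ. -/
/-!
The coadjunction `θ` is the conjugate of `η` with respect to the adjunctions `L ⊣ Γ` and
`𝟭 ⊣ 𝟭`. Conjugation commutes with whiskering, so `Γθ` is the conjugate of `ηL` and `θΓ` is the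
conjugate of `Lη`. Conjugation is a bijection which preserves isomorphisms, hence `Lη = ηL`
gives `Γθ = θΓ`, and invertibility of `ηL` gives invertibility of `Γθ`.
-/

open CategoryTheory Functor

namespace CategoryTheory.Adjunction

variable {C : Type*} [Category C] {L Γ : C ⥤ C} (adj : L ⊣ Γ) (η : 𝟭 C ⟶ L)

lemma id_comp_eq_comp_id : Adjunction.id.comp adj = adj.comp Adjunction.id := by
  ext; simp

lemma whiskerRight_conjugateEquiv_eq_whiskerLeft
    (h : whiskerRight η L = whiskerLeft L η) :
    whiskerRight (conjugateEquiv adj Adjunction.id η) Γ =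
      whiskerLeft Γ (conjugateEquiv adj Adjunction.id η) := by
  rw [← conjugateEquiv_whiskerLeft, ← conjugateEquiv_whiskerRight, h, id_comp_eq_comp_id]

instance isIso_whiskerRight_conjugateEquiv [IsIso (whiskerLeft L η)] :
    IsIso (whiskerRight (conjugateEquiv adj Adjunction.id η) Γ) := by
  rw [← conjugateEquiv_whiskerLeft adj Adjunction.id adj]
  infer_instance

end CategoryTheory.Adjunction

/-- **Lemma (loc-adjoint, part 1).** Let `L : C ⥤ C` be a localization functor with
adjunction `η : 𝟭 C ⟶ L` (so `L(ηX)` is invertible and `L(ηX) = η(LX)` for all `X`),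
and suppose `L` admits a right adjoint `Γ`.  Then `Γ` is a colocalization functor:
the coadjunction `θ : Γ ⟶ 𝟭 C`, given at `Y` by `η_{ΓY} ≫ ε_Y` (the image of the identity
under `Hom(ΓY, ΓY) ≅ Hom(LΓY, Y)` followed by precomposition with `η`), satisfies that
`Γ(θY)` is invertible and `Γ(θY) = θ(ΓY)` for all `Y`. -/
theorem stmt4 {C : Type*} [Category C] (L Γ : C ⥤ C) (η : 𝟭 C ⟶ L)
    (hloc : ∀ X : C, IsIso (L.map (η.app X)) ∧ L.map (η.app X) = η.app (L.obj X))
    (adj : L ⊣ Γ) :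
    ∀ Y : C,
      IsIso (Γ.map (η.app (Γ.obj Y) ≫ adj.counit.app Y)) ∧
      Γ.map (η.app (Γ.obj Y) ≫ adj.counit.app Y) =
        η.app (Γ.obj (Γ.obj Y)) ≫ adj.counit.app (Γ.obj Y) := by
  intro Y
  have hηL : whiskerRight η L = whiskerLeft L η := by
    ext X; exact (hloc X).2
  have (X : C) : IsIso ((whiskerLeft L η).app X) := (hloc X).2 ▸ (hloc X).1
  have := NatIso.isIso_of_isIso_app (whiskerLeft L η)
  rw [← conjugateEquiv_adjunction_id adj η Y, ← conjugateEquiv_adjunction_id adj η (Γ.obj Y)]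
  exact ⟨NatIso.isIso_app_of_isIso (whiskerRight _ Γ) Y,
    congr_app (adj.whiskerRight_conjugateEquiv_eq_whiskerLeft η hηL) Y⟩
end

section
/- Let L : C → C be a localization functor with adjunction η : Id → L, admitting a right adjoint Γ. Then the essential image of Γ equals the essential image of L. -/
/-!
Call `X` local when `η X` is invertible. Because `L η = η L`, `η X` is invertible as soon as it
has a retraction, and `L` is bijective on morphisms into a local object. The first fact, with the
adjoint transpose of `(L (η (Γ Y)))⁻¹ ≫ ε Y` as retraction, makes every `Γ Y` local, hence in the
image of `L`. The second, transported along `L ⊣ Γ`, makes the unit `X ⟶ Γ (L X)` invertible for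
local `X`; objects of the image of `L` are local, so they lie in the image of `Γ`.
-/

open CategoryTheory

section
variable {C : Type*} [Category C] {L : C ⥤ C} {η : 𝟭 C ⟶ L}

theorem isIso_app_of_retraction (hηL : ∀ X, L.map (η.app X) = η.app (L.obj X)) {X : C}
    {r : L.obj X ⟶ X} (hr : η.app X ≫ r = 𝟙 X) : IsIso (η.app X) :=
  ⟨r, hr, by
    have := η.naturality r
    dsimp at this
    rw [this, ← hηL, ← L.map_comp, hr]
    exact L.map_id X⟩

theorem isIso_app_of_mem_essImage (hLη : ∀ X, IsIso (L.map (η.app X)))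
    (hηL : ∀ X, L.map (η.app X) = η.app (L.obj X)) {X : C} (hX : L.essImage X) :
    IsIso (η.app X) := by
  obtain ⟨Y, ⟨e⟩⟩ := hX
  rw [← NatTrans.isIso_app_iff_of_iso η e, ← hηL]
  exact hLη Y

theorem bijective_map_of_isIso_app (hηL : ∀ X, L.map (η.app X) = η.app (L.obj X)) {X : C}
    [IsIso (η.app X)] (Z : C) :
    Function.Bijective (L.map : (Z ⟶ X) → (L.obj Z ⟶ L.obj X)) := by
  have hη : ∀ f : Z ⟶ X, f = η.app Z ≫ L.map f ≫ inv (η.app X) := fun f => by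
    rw [← Category.assoc, ← η.naturality f]
    simp
  refine ⟨fun f g h => by rw [hη f, hη g, h], fun g => ⟨η.app Z ≫ g ≫ inv (η.app X), ?_⟩⟩
  simp [hηL]

theorem isIso_app_rightAdjoint_obj (hLη : ∀ X, IsIso (L.map (η.app X)))
    (hηL : ∀ X, L.map (η.app X) = η.app (L.obj X)) {Γ : C ⥤ C} (adj : L ⊣ Γ) (Y : C) :
    IsIso (η.app (Γ.obj Y)) := by
  have := hLη (Γ.obj Y)
  refine isIso_app_of_retraction hηL
    (r := adj.homEquiv _ _ (inv (L.map (η.app (Γ.obj Y))) ≫ adj.counit.app Y)) ?_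
  rw [← adj.homEquiv_naturality_left, IsIso.hom_inv_id_assoc, adj.homEquiv_unit]
  exact adj.right_triangle_components Y

theorem isIso_unit_app_of_isIso_app (hηL : ∀ X, L.map (η.app X) = η.app (L.obj X))
    {Γ : C ⥤ C} (adj : L ⊣ Γ) {X : C} [IsIso (η.app X)] : IsIso (adj.unit.app X) := by
  refine isIso_of_yoneda_map_bijective _ fun Z => ?_
  have hcomp : adj.homEquiv _ _ ∘ L.map = fun f : Z ⟶ X => f ≫ adj.unit.app X := by
    ext f
    simp [adj.homEquiv_unit]
  exact hcomp ▸ (adj.homEquiv _ _).bijective.comp (bijective_map_of_isIso_app hηL Z)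

end

/-- **Lemma (loc-adjoint, part 2).** If `L : C ⥤ C` is a localization functor
(with adjunction `η : 𝟭 ⟶ L` such that `Lη` is invertible and `Lη = ηL`) admitting a
right adjoint `Γ`, then the essential image of `Γ` equals the essential image of `L`. -/
theorem stmt5 {C : Type*} [Category C] (L Γ : C ⥤ C) (η : 𝟭 C ⟶ L)
    (hloc : ∀ X : C, IsIso (L.map (η.app X)) ∧ L.map (η.app X) = η.app (L.obj X))
    (adj : L ⊣ Γ) :
    Γ.essImage = L.essImage := by
  obtain ⟨hLη, hηL⟩ := forall_and.mp hloc
  ext X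
  constructor
  · rintro ⟨Y, ⟨e⟩⟩
    have := isIso_app_rightAdjoint_obj hLη hηL adj Y
    exact ⟨Γ.obj Y, ⟨(asIso (η.app (Γ.obj Y))).symm ≪≫ e⟩⟩
  · intro hX
    have := isIso_app_of_mem_essImage hLη hηL hX
    have := isIso_unit_app_of_isIso_app hηL adj (X := X)
    exact ⟨L.obj X, ⟨(asIso (adj.unit.app X)).symm⟩⟩
end

section
/- Let L : C → C be a localization functor admitting a left adjoint Γ. Then: a morphism φ in C is inverted by Γ if and only if it is inverted by L. -/
/-!
Both conditions are equivalent to `φ` being local with respect to the local objects, i.e. to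
`φ ≫ - : (Y ⟶ L Z) → (X ⟶ L Z)` being bijective for every `Z`. For `Γ` this is the adjunction
`(Γ Y ⟶ T) ≃ (Y ⟶ L T)` combined with Yoneda. For `L`, idempotence makes each `η X` local, so by
naturality `φ` is local iff `L φ` is, and a morphism between local objects is local iff it is an
isomorphism.
-/

open CategoryTheory ObjectProperty

namespace CategoryTheory

variable {C D : Type*} [Category C] [Category D]

lemma Adjunction.isLocal_range_iff_isIso_map {F : C ⥤ D} {G : D ⥤ C} (adj : G ⊣ F) {X Y : D}
    (f : X ⟶ Y) : isLocal (· ∈ Set.range F.obj) f ↔ IsIso (G.map f) := by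
  have conj : ∀ T : C, (fun u : G.obj Y ⟶ T => G.map f ≫ u) =
      (adj.homEquiv X T).symm ∘ (fun g : Y ⟶ F.obj T => f ≫ g) ∘ adj.homEquiv Y T := by
    intro T
    funext u
    simp only [Function.comp_apply, ← adj.homEquiv_naturality_left, Equiv.symm_apply_apply]
  simp only [isIso_iff_coyoneda_map_bijective, conj, Equiv.comp_bijective, Equiv.bijective_comp]
  exact Set.forall_mem_range

section Idempotent

variable {L : C ⥤ C} (η : 𝟭 C ⟶ L) [∀ X, IsIso (η.app (L.obj X))]

lemma isLocal_range_app (hη : ∀ X, L.map (η.app X) = η.app (L.obj X)) (X : C) :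
    isLocal (· ∈ Set.range L.obj) (η.app X) := by
  rintro _ ⟨Z, rfl⟩
  refine Function.bijective_iff_has_inverse.2
    ⟨fun h => L.map h ≫ inv (η.app (L.obj Z)), fun g => ?_, fun h => ?_⟩
  · dsimp only
    rw [Functor.map_comp, hη, ← η.naturality g]
    simp
  · dsimp only
    rw [← η.naturality_assoc]
    simp

lemma isLocal_range_iff_isIso_map (hη : ∀ X, L.map (η.app X) = η.app (L.obj X)) {X Y : C}
    (f : X ⟶ Y) : isLocal (· ∈ Set.range L.obj) f ↔ IsIso (L.map f) := by
  have naturality : f ≫ η.app Y = η.app X ≫ L.map f := η.naturality f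
  rw [← (isLocal _).postcomp_iff _ _ (isLocal_range_app η hη Y), naturality,
    (isLocal _).precomp_iff _ _ (isLocal_range_app η hη X)]
  exact isLocal_iff_isIso _ _ ⟨X, rfl⟩ ⟨Y, rfl⟩

end Idempotent

end CategoryTheory

/-- **Proposition (leftadjoint, (1) ⟹ (3)).** Let `L : C ⥤ C` be a localization functor
admitting a left adjoint `Γ`.  Then a morphism `φ` of `C` is inverted by `Γ` if and only
if it is inverted by `L`. -/
theorem stmt8 {C : Type*} [Category C] (L Γ : C ⥤ C) (η : 𝟭 C ⟶ L)
    (hloc : ∀ X : C, IsIso (L.map (η.app X)) ∧ L.map (η.app X) = η.app (L.obj X))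
    (adj : Γ ⊣ L) :
    ∀ {X Y : C} (φ : X ⟶ Y), IsIso (Γ.map φ) ↔ IsIso (L.map φ) := by
  intro X Y φ
  have : ∀ A, IsIso (η.app (L.obj A)) := fun A => (hloc A).2 ▸ (hloc A).1
  rw [← adj.isLocal_range_iff_isIso_map, isLocal_range_iff_isIso_map η fun A => (hloc A).2]
end

section
/- Let T be a triangulated category, L a localization functor on T with associated colocalization Γ (so ΓX → X → LX → is exact), and suppose Γ has a right adjoint Λ which is a localization functor with Im Λ satisfying ΛΓ ≅ Λ and ΓΛ ≅ Γ. Then Γ and Λ restrict to mutually quasi-inverse equivalences between Im Λ and Im Γ. -/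
/-!
Restricting `Γ ⊣ Λ` gives an adjunction between `Im Λ` and `Im Γ`, so it suffices that `Γ`
restricts to an equivalence `Im Λ ⥤ Im Γ`. Following it by `Λ` gives `ΛΓ ≅ Λ`, and on `Im Λ` the
unit of the localization `Λ` identifies `Λ` with the inclusion; since `Λ` is faithful on `Im Γ`
(the counit is split epi on objects `ΓX`), the restriction of `Γ` is fully faithful. It is
essentially surjective because `ΓΛW ≅ ΓW`.
-/

open CategoryTheory Limits Pretriangulated

namespace CategoryTheory

variable {C D : Type*} [Category C] [Category D]

lemma NatTrans.isIso_app_of_mem_essImage {E : Type*} [Category E]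
    {F : D ⥤ C} {G H : C ⥤ E} (φ : G ⟶ H) (h : ∀ X, IsIso (φ.app (F.obj X)))
    {A : C} (hA : F.essImage A) : IsIso (φ.app A) := by
  obtain ⟨X, ⟨e⟩⟩ := hA
  exact (NatTrans.isIso_app_iff_of_iso φ e).1 (h X)

lemma Adjunction.epi_counit_app_of_mem_essImage {F : C ⥤ D} {G : D ⥤ C} (adj : F ⊣ G)
    {A : D} (hA : F.essImage A) : Epi (adj.counit.app A) := by
  obtain ⟨X, ⟨e⟩⟩ := hA
  have : IsSplitEpi (adj.counit.app (F.obj X)) :=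
    IsSplitEpi.mk' ⟨F.map (adj.unit.app X), adj.left_triangle_components X⟩
  have hcounit : adj.counit.app A = F.map (G.map e.inv) ≫ adj.counit.app (F.obj X) ≫ e.hom := by
    simp
  rw [hcounit]
  infer_instance

lemma Adjunction.faithful_essImage_ι_comp {F : C ⥤ D} {G : D ⥤ C} (adj : F ⊣ G) :
    (F.essImage.ι ⋙ G).Faithful where
  map_injective {A Z} u v huv := by
    ext
    have := adj.epi_counit_app_of_mem_essImage A.property
    have hG : G.map u.hom = G.map v.hom := huv
    rw [← cancel_epi (adj.counit.app A.obj)]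
    simpa using congrArg (fun f => F.map f ≫ adj.counit.app Z.obj) hG

noncomputable def Adjunction.restrictEssImage {F : C ⥤ D} {G : D ⥤ C}
    (adj : F ⊣ G) : G.essImage.ι ⋙ F.toEssImage ⊣ F.essImage.ι ⋙ G.toEssImage :=
  adj.restrictFullyFaithful G.essImage.fullyFaithfulι F.essImage.fullyFaithfulι
    (Iso.refl _) (Iso.refl _)

noncomputable def Functor.essImageιIsoComp {F : C ⥤ C} (η : 𝟭 C ⟶ F)
    (hη : ∀ X, IsIso (η.app (F.obj X))) : F.essImage.ι ≅ F.essImage.ι ⋙ F :=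
  NatIso.ofComponents
    (fun A => have := η.isIso_app_of_mem_essImage hη A.property; asIso (η.app A.obj))
    (fun f => η.naturality f.hom)

lemma isEquivalence_essImage_ι_comp_toEssImage {Γ Λ : C ⥤ C} (η : 𝟭 C ⟶ Λ)
    (hη : ∀ X, IsIso (η.app (Λ.obj X))) (adj : Γ ⊣ Λ) (e₁ : Γ ⋙ Λ ≅ Λ)
    (e₂ : Λ ⋙ Γ ≅ Γ) : (Λ.essImage.ι ⋙ Γ.toEssImage).IsEquivalence := by
  have := adj.faithful_essImage_ι_comp
  have hcomp : (Λ.essImage.ι ⋙ Γ.toEssImage) ⋙ Γ.essImage.ι ⋙ Λ ≅ Λ.essImage.ι :=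
    Functor.isoWhiskerLeft Λ.essImage.ι e₁ ≪≫ (Functor.essImageιIsoComp η hη).symm
  have : (Λ.essImage.ι ⋙ Γ.toEssImage).Faithful := Functor.Faithful.of_comp_iso hcomp
  have : (Λ.essImage.ι ⋙ Γ.toEssImage).Full := Functor.Full.of_comp_faithful_iso hcomp
  have : (Λ.essImage.ι ⋙ Γ.toEssImage).EssSurj := ⟨fun B => by
    obtain ⟨W, ⟨e⟩⟩ := B.property
    exact ⟨⟨Λ.obj W, Λ.obj_mem_essImage W⟩, ⟨ObjectProperty.isoMk _ (e₂.app W ≪≫ e)⟩⟩⟩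
  exact {}

end CategoryTheory

/-- **Proposition (coloc-fun (4)).** Let `T` be a triangulated category, `L` a localization
functor with associated colocalization `Γ` (functorial exact triangle `ΓX → X → LX → ΣΓX`),
and `Λ` a right adjoint of `Γ` which is itself a localization functor, satisfying
`ΛΓ ≅ Λ` and `ΓΛ ≅ Γ`.  Then `Γ` and `Λ` restrict to mutually quasi-inverse equivalences
between `Im Λ` and `Im Γ`. -/
theorem stmt10 {T : Type*} [Category T] [Preadditive T] [HasZeroObject T]
    [HasShift T ℤ] [∀ n : ℤ, (CategoryTheory.shiftFunctor T n).Additive]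
    [Pretriangulated T]
    (L Gam : T ⥤ T) (η : 𝟭 T ⟶ L) (θ : Gam ⟶ 𝟭 T)
    (δ : L ⟶ Gam ⋙ CategoryTheory.shiftFunctor T (1 : ℤ))
    (hloc : ∀ X : T, IsIso (L.map (η.app X)) ∧ L.map (η.app X) = η.app (L.obj X))
    (htri : ∀ X : T, Triangle.mk (θ.app X) (η.app X) (δ.app X) ∈ distTriang T)
    (Lam : T ⥤ T) (adj : Gam ⊣ Lam) (ηΛ : 𝟭 T ⟶ Lam)
    (hΛloc : ∀ X : T, IsIso (Lam.map (ηΛ.app X)) ∧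
      Lam.map (ηΛ.app X) = ηΛ.app (Lam.obj X))
    (e₁ : Gam ⋙ Lam ≅ Lam) (e₂ : Lam ⋙ Gam ≅ Gam) :
    ∃ (G : Lam.EssImageSubcategory ⥤ Gam.EssImageSubcategory)
      (H : Gam.EssImageSubcategory ⥤ Lam.EssImageSubcategory),
      (∀ X : Lam.EssImageSubcategory, (G.obj X).obj = Gam.obj X.obj) ∧
      (∀ X : Gam.EssImageSubcategory, (H.obj X).obj = Lam.obj X.obj) ∧
      Nonempty (G ⋙ H ≅ 𝟭 _) ∧ Nonempty (H ⋙ G ≅ 𝟭 _) := by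
  have hη (X : T) : IsIso (ηΛ.app (Lam.obj X)) := (hΛloc X).2 ▸ (hΛloc X).1
  have := isEquivalence_essImage_ι_comp_toEssImage ηΛ hη adj e₁ e₂
  have := adj.restrictEssImage.isEquivalence_right_of_isEquivalence_left
  exact ⟨_, _, fun _ => rfl, fun _ => rfl, ⟨(asIso adj.restrictEssImage.unit).symm⟩,
    ⟨asIso adj.restrictEssImage.counit⟩⟩
end

section
/- Let T be a tensor triangulated category with internal Hom as above, and let S be a colocalizing subcategory of T. Then for every X in the localizing subcategory generated by the tensor unit 𝟙 and every Y in S, the internal Hom object Hom(X,Y) is in S. In particular, if 𝟙 generates T, every colocalizing subcategory of T is Hom closed. -/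
/-!
The objects `X` with `Hom(X, Y) ∈ S` for all `Y ∈ S` form a localizing subcategory: `Hom(-, Y)`
turns shifts, distinguished triangles and coproducts into shifts, (rotated) distinguished
triangles and products, under which `S` is closed. It contains `𝟙` since `Hom(𝟙, Y) ≅ Y`,
hence it contains the localizing subcategory generated by `𝟙`.
-/

open CategoryTheory Limits Pretriangulated Opposite MonoidalCategory

universe v u

variable {T : Type u} [Category.{v} T]

section Defs

variable [Preadditive T] [HasZeroObject T] [HasShift T ℤ]
  [∀ n : ℤ, (CategoryTheory.shiftFunctor T n).Additive] [Pretriangulated T]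

/-- A localizing subcategory: a (strictly full) triangulated subcategory closed under
set-indexed coproducts, encoded as a set of objects. -/
def IsLocalizing [HasCoproducts.{v} T] (S : Set T) : Prop :=
  (∀ X Y : T, X ∈ S → (X ≅ Y) → Y ∈ S) ∧
  (∀ X ∈ S, ∀ n : ℤ, X⟦n⟧ ∈ S) ∧
  (∀ Tri : Triangle T, Tri ∈ (distTriang T) →
    Tri.obj₁ ∈ S → Tri.obj₂ ∈ S → Tri.obj₃ ∈ S) ∧
  (∀ {ι : Type v} (X : ι → T), (∀ i, X i ∈ S) → (∐ X) ∈ S)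

/-- A colocalizing subcategory: a (strictly full) triangulated subcategory closed under
set-indexed products, encoded as a set of objects. -/
def IsColocalizing [HasProducts.{v} T] (S : Set T) : Prop :=
  (∀ X Y : T, X ∈ S → (X ≅ Y) → Y ∈ S) ∧
  (∀ X ∈ S, ∀ n : ℤ, X⟦n⟧ ∈ S) ∧
  (∀ Tri : Triangle T, Tri ∈ (distTriang T) →
    Tri.obj₁ ∈ S → Tri.obj₂ ∈ S → Tri.obj₃ ∈ S) ∧
  (∀ {ι : Type v} (X : ι → T), (∀ i, X i ∈ S) → (∏ᶜ X) ∈ S)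

/-- The localizing subcategory generated by a class of objects. -/
def locGen [HasCoproducts.{v} T] (A : Set T) : Set T :=
  ⋂₀ {S : Set T | IsLocalizing S ∧ A ⊆ S}

end Defs

section IhomStable

variable [MonoidalCategory T] [MonoidalClosed T]

def ihomStable (S : Set T) : Set T :=
  {X | ∀ Y ∈ S, (ihom X).obj Y ∈ S}

variable {S : Set T} (hSiso : ∀ X Y : T, X ∈ S → (X ≅ Y) → Y ∈ S)
include hSiso

theorem unit_mem_ihomStable : 𝟙_ T ∈ ihomStable S :=
  fun Y hY => hSiso _ _ hY (MonoidalClosed.unitNatIso.app Y)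

theorem ihomStable_of_iso {X X' : T} (hX : X ∈ ihomStable S) (e : X ≅ X') :
    X' ∈ ihomStable S :=
  fun Y hY => hSiso _ _ (hX Y hY) ((MonoidalClosed.internalHom.mapIso e.symm.op).app Y)

end IhomStable

section Triangulated

variable [Preadditive T] [HasZeroObject T] [HasShift T ℤ]
  [∀ n : ℤ, (shiftFunctor T n).Additive] [Pretriangulated T]

theorem locGen_subset [HasCoproducts.{v} T] {A S : Set T} (hS : IsLocalizing S) (hA : A ⊆ S) :
    locGen A ⊆ S :=
  Set.sInter_subset_of_mem ⟨hS, hA⟩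

variable [HasProducts.{v} T] [MonoidalCategory T] [MonoidalClosed T] {S : Set T}
  (hS : IsColocalizing S)
include hS

theorem ihomStable_shift
    (hshift : ∀ (Y X : T) (n : ℤ), Nonempty ((ihom (X⟦n⟧)).obj Y ≅ ((ihom X).obj Y)⟦-n⟧))
    {X : T} (hX : X ∈ ihomStable S) (n : ℤ) : X⟦n⟧ ∈ ihomStable S := by
  intro Y hY
  obtain ⟨e⟩ := hshift Y X n
  exact hS.1 _ _ (hS.2.1 _ (hX Y hY) (-n)) e.symm

/-- The triangle `Hom(X₃,Y) → Hom(X₂,Y) → Hom(X₁,Y) →` rotates to one with third vertex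
`Hom(X₃,Y)⟦1⟧`. -/
theorem ihomStable_triangle
    (hexact : ∀ (Y : T) (Tri : Triangle T), Tri ∈ (distTriang T) →
      ∃ δ : (ihom Tri.obj₁).obj Y ⟶ ((ihom Tri.obj₃).obj Y)⟦(1 : ℤ)⟧,
        Triangle.mk ((MonoidalClosed.pre Tri.mor₂).app Y)
          ((MonoidalClosed.pre Tri.mor₁).app Y) δ ∈ distTriang T)
    (Tri : Triangle T) (hTri : Tri ∈ distTriang T)
    (h₁ : Tri.obj₁ ∈ ihomStable S) (h₂ : Tri.obj₂ ∈ ihomStable S) :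
    Tri.obj₃ ∈ ihomStable S := by
  intro Y hY
  obtain ⟨δ, hδ⟩ := hexact Y Tri hTri
  have hshifted : ((ihom Tri.obj₃).obj Y)⟦(1 : ℤ)⟧ ∈ S :=
    hS.2.2.1 _ (rot_of_distTriang _ hδ) (h₂ Y hY) (h₁ Y hY)
  exact hS.1 _ _ (hS.2.1 _ hshifted (-1)) (shiftShiftNeg _ 1)

theorem ihomStable_coproduct
    (hprod : ∀ (Y : T) {ι : Type v} (X : ι → T) (c : Cofan X), IsColimit c →
      Nonempty (IsLimit (Fan.mk ((ihom c.pt).obj Y)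
        (fun i => (MonoidalClosed.pre (c.inj i)).app Y))))
    [HasCoproducts.{v} T] {ι : Type v} (X : ι → T) (hX : ∀ i, X i ∈ ihomStable S) :
    ∐ X ∈ ihomStable S := by
  intro Y hY
  obtain ⟨hlim⟩ := hprod Y X _ (coproductIsCoproduct X)
  exact hS.1 _ _ (hS.2.2.2 _ fun i => hX i Y hY)
    (IsLimit.conePointUniqueUpToIso (limit.isLimit _) hlim)

theorem isLocalizing_ihomStable [HasCoproducts.{v} T]
    (hexact : ∀ (Y : T) (Tri : Triangle T), Tri ∈ (distTriang T) →
      ∃ δ : (ihom Tri.obj₁).obj Y ⟶ ((ihom Tri.obj₃).obj Y)⟦(1 : ℤ)⟧,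
        Triangle.mk ((MonoidalClosed.pre Tri.mor₂).app Y)
          ((MonoidalClosed.pre Tri.mor₁).app Y) δ ∈ distTriang T)
    (hshift : ∀ (Y X : T) (n : ℤ), Nonempty ((ihom (X⟦n⟧)).obj Y ≅ ((ihom X).obj Y)⟦-n⟧))
    (hprod : ∀ (Y : T) {ι : Type v} (X : ι → T) (c : Cofan X), IsColimit c →
      Nonempty (IsLimit (Fan.mk ((ihom c.pt).obj Y)
        (fun i => (MonoidalClosed.pre (c.inj i)).app Y)))) :
    IsLocalizing (ihomStable S) :=
  ⟨fun _ _ hX e => ihomStable_of_iso hS.1 hX e,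
    fun _ hX n => ihomStable_shift hS hshift hX n,
    ihomStable_triangle hS hexact,
    fun X hX => ihomStable_coproduct hS hprod X hX⟩

end Triangulated

/-- **Lemma (Hom-closed).** Let `T` be a tensor triangulated category with internal function
objects (with `Hom(-,Y)` exact and sending coproducts to products), and `S` a colocalizing
subcategory of `T`.  Then `Hom(X,Y) ∈ S` for every `X` in the localizing subcategory
generated by the tensor unit `𝟙` and every `Y ∈ S`.  In particular, if `𝟙` generates `T`,
then every colocalizing subcategory of `T` is Hom closed. -/
theorem stmt13 [Preadditive T] [HasZeroObject T] [HasShift T ℤ]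
    [∀ n : ℤ, (CategoryTheory.shiftFunctor T n).Additive] [Pretriangulated T]
    [HasCoproducts.{v} T] [HasProducts.{v} T]
    [MonoidalCategory T] [SymmetricCategory T] [MonoidalClosed T]
    (hexact : ∀ (Y : T) (Tri : Triangle T), Tri ∈ (distTriang T) →
      ∃ δ : (ihom Tri.obj₁).obj Y ⟶ ((ihom Tri.obj₃).obj Y)⟦(1 : ℤ)⟧,
        Triangle.mk ((MonoidalClosed.pre Tri.mor₂).app Y)
          ((MonoidalClosed.pre Tri.mor₁).app Y) δ ∈ distTriang T)
    (hshift : ∀ (Y X : T) (n : ℤ),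
      Nonempty ((ihom (X⟦n⟧)).obj Y ≅ ((ihom X).obj Y)⟦-n⟧))
    (hprod : ∀ (Y : T) {ι : Type v} (X : ι → T) (c : Cofan X), IsColimit c →
      Nonempty (IsLimit (Fan.mk ((ihom c.pt).obj Y)
        (fun i => (MonoidalClosed.pre (c.inj i)).app Y))))
    (S : Set T) (hS : IsColocalizing S) :
    (∀ X ∈ locGen {(𝟙_ T)}, ∀ Y ∈ S, (ihom X).obj Y ∈ S) ∧
    ((∀ Z : T, Z ∈ locGen {(𝟙_ T)}) →
      ∀ X Y : T, Y ∈ S → (ihom X).obj Y ∈ S) := by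
  have hsub : locGen {(𝟙_ T)} ⊆ ihomStable S :=
    locGen_subset (isLocalizing_ihomStable hS hexact hshift hprod)
      (Set.singleton_subset_iff.mpr (unit_mem_ihomStable hS.1))
  exact ⟨hsub, fun hall X => hsub (hall X)⟩
end

section
/- Let T be a compactly generated R-linear triangulated category with R graded-commutative noetherian. For every nonzero object X of T the cosupport cosupp_R X is nonempty; equivalently, cosupp_R X = ∅ if and only if X = 0. -/
/-!
Since `R` is noetherian, a nonzero `X` has a prime `p` maximal in `supp X`. Then `X//p ≅ X(p)`,
and `X//p ≠ 0` because `p ∈ supp (X//p)`; so the inverse of this isomorphism is a nonzero map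
`X(p) → X//p`, thick closure turns it into a nonzero map `X(p) → X`, and hence `p ∈ cosupp X`.
Conversely `Λ^p`, being a right adjoint, kills the zero object.
-/

open CategoryTheory Limits Pretriangulated

universe v u

instance PrimeSpectrum.wellFoundedGT {R : Type*} [CommRing R] [IsNoetherianRing R] :
    WellFoundedGT (PrimeSpectrum R) :=
  StrictMono.wellFoundedGT (f := PrimeSpectrum.asIdeal) fun _ _ h => h

lemma CategoryTheory.Iso.inv_ne_zero {C : Type*} [Category C] [HasZeroMorphisms C] {X Y : C}
    (e : X ≅ Y) (hX : ¬ IsZero X) : e.inv ≠ 0 := fun h =>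
  hX <| (IsZero.iff_id_eq_zero X).2 <| by rw [← e.hom_inv_id, h, comp_zero]

/-- **Theorem (cosupp = ∅ iff zero).** Let `T` be a compactly generated `R`-linear
triangulated category (`R` commutative noetherian), with local cohomology functors `Γ_p`
and local homology functors `Λ^p` (right adjoints), Koszul objects `X ↦ X//p` and
localized Koszul objects `X ↦ X(p)`; `supp_R X = {p : Γ_p X ≠ 0}` and
`cosupp_R X = {p : Λ^p X ≠ 0}`.  Given the standard facts about supports and Koszul
objects, one has: `cosupp_R X = ∅` if and only if `X = 0`. -/
theorem stmt15 {R : Type*} [CommRing R] [IsNoetherianRing R]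
    {T : Type u} [Category.{v} T] [Preadditive T] [HasZeroObject T]
    [HasShift T ℤ] [∀ n : ℤ, (CategoryTheory.shiftFunctor T n).Additive]
    [Pretriangulated T]
    (Gam Lam : PrimeSpectrum R → T ⥤ T)
    (adj : ∀ p, Gam p ⊣ Lam p)
    (kos objp : T → PrimeSpectrum R → T) :
    -- the support and cosupport of an object
    let supp : T → Set (PrimeSpectrum R) := fun X => {p | ¬ IsZero ((Gam p).obj X)}
    let cosupp : T → Set (PrimeSpectrum R) := fun X => {p | ¬ IsZero ((Lam p).obj X)}
    -- an object is zero iff its support is empty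
    (∀ X : T, supp X = ∅ ↔ IsZero X) →
    -- `supp (X//p) = V(p) ∩ supp X`
    (∀ (X : T) (p), supp (kos X p) = {q | p.asIdeal ≤ q.asIdeal} ∩ supp X) →
    -- if `p` is maximal in `supp X` then the Koszul object `X//p` is `p`-local,
    -- hence isomorphic to `X(p)`
    (∀ (X : T) (p), p ∈ supp X → (∀ q ∈ supp X, p.asIdeal ≤ q.asIdeal → q = p) →
      Nonempty (kos X p ≅ objp X p)) →
    -- thick closure: a nonzero map `X(p) → X//p` yields a nonzero map `X(p) → X`
    (∀ (X : T) (p) (f : objp X p ⟶ kos X p), f ≠ 0 → ∃ g : objp X p ⟶ X, g ≠ 0) →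
    -- the characterization of cosupport via localized Koszul objects
    (∀ (X : T) (p), (∃ (C : T) (f : objp C p ⟶ X), f ≠ 0) → p ∈ cosupp X) →
    ∀ X : T, cosupp X = ∅ ↔ IsZero X := by
  intro supp cosupp supp_eq_empty supp_kos kos_iso exists_ne_zero_to mem_cosupp X
  refine ⟨fun hX => ?_, fun hX => ?_⟩
  · by_contra hX0
    have supp_ne : (supp X).Nonempty :=
      Set.nonempty_iff_ne_empty.2 fun h => hX0 ((supp_eq_empty X).1 h)
    obtain ⟨p, hp⟩ := WellFoundedGT.exists_maximal inferInstance (supp X) supp_ne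
    obtain ⟨e⟩ := kos_iso X p hp.prop fun q hq hpq => hp.eq_of_ge hq hpq
    have kos_ne : ¬ IsZero (kos X p) := fun h => by
      have hp_kos : p ∈ supp (kos X p) := (supp_kos X p).symm ▸ ⟨le_refl p.asIdeal, hp.prop⟩
      rw [(supp_eq_empty _).2 h] at hp_kos
      exact hp_kos
    obtain ⟨g, hg⟩ := exists_ne_zero_to X p e.inv (e.inv_ne_zero kos_ne)
    have hp_cosupp : p ∈ cosupp X := mem_cosupp X p ⟨X, g, hg⟩
    rw [hX] at hp_cosupp
    exact hp_cosupp
  · refine Set.eq_empty_of_forall_notMem fun p hp => hp ?_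
    have := (adj p).isRightAdjoint
    exact (Lam p).map_isZero hX
end
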